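/- Closure of the winning region of a safety game: let G = (G, g₀, Σ_I, Σ_O, δ, F) be a safety game with Σ_O nonempty, and let W be the winning region of the system (the set of states from which a history-dependent winning strategy exists). Then W ⊆ F, and for every g ∈ W and every input σ_I ∈ Σ_I there exists an output σ_O ∈ Σ_O such that δ(g, σ_I, σ_O) ∈ W. -/

import Mathlib

/-- The play of a safety game with transition function `δ` from state `g` under
input sequence `x` and output sequence `y`. -/
def play {G SI SO : Type*} (δ : G → SI → SO → G) (g : G) (x : ℕ → SI) (y : ℕ → SO) :
    ℕ → G
  | 0 => g
  | n + 1 => δ (play δ g x y n) (x n) (y n)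

/-- A (history-dependent) system strategy `st` (mapping the input history and the
current input letter to an output letter) is winning from state `g` if for every
input sequence the play visits only states in `F`. -/
def histWinningFrom {G SI SO : Type*} (δ : G → SI → SO → G) (F : Set G)
    (st : List SI → SI → SO) (g : G) : Prop :=
  ∀ x : ℕ → SI, ∀ i : ℕ,
    play δ g x (fun j => st ((List.range j).map x) (x j)) i ∈ F

/-- The winning region: the set of states from which some (history-dependent)
winning strategy for the system exists. -/
def winningRegion {G SI SO : Type*} (δ : G → SI → SO → G) (F : Set G) : Set G :=
  {g | ∃ st : List SI → SI → SO, histWinningFrom δ F st g}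

/-! The continuation of a winning strategy after its first round, `fun h a => st (σ :: h) a`,
is winning from the state reached in that round: a play from there is the tail of a play
from `g` whose input sequence starts with `σ`. -/

theorem List.map_range_succ {α : Type*} (x : ℕ → α) (n : ℕ) :
    (List.range (n + 1)).map x = x 0 :: (List.range n).map (fun k => x (k + 1)) := by
  rw [List.range_succ_eq_map, List.map_cons, List.map_map]
  rfl

section

variable {G SI SO : Type*}

theorem play_succ_eq_play_tail (δ : G → SI → SO → G) (g : G) (x : ℕ → SI) (y : ℕ → SO)
    (i : ℕ) :
    play δ g x y (i + 1) =
      play δ (δ g (x 0) (y 0)) (fun n => x (n + 1)) (fun n => y (n + 1)) i := by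
  induction i with
  | zero => rfl
  | succ n ih => rw [play, ih, play]

variable {δ : G → SI → SO → G} {F : Set G} {st : List SI → SI → SO} {g : G}

theorem histWinningFrom.mem [Nonempty SI] (h : histWinningFrom δ F st g) : g ∈ F :=
  h (fun _ => Classical.arbitrary SI) 0

theorem histWinningFrom.step (h : histWinningFrom δ F st g) (σ : SI) :
    histWinningFrom δ F (fun hist a => st (σ :: hist) a) (δ g σ (st [] σ)) := by
  intro x i
  have hcons := h (fun n => Nat.casesOn n σ x) (i + 1)
  rw [play_succ_eq_play_tail] at hcons
  simp only [List.map_range_succ] at hcons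
  exact hcons

end

theorem winningRegion_closed_general {G SI SO : Type*} [Nonempty SI]
    (δ : G → SI → SO → G) (F : Set G) :
    winningRegion δ F ⊆ F ∧
      ∀ g ∈ winningRegion δ F, ∀ σI : SI, ∃ σO : SO,
        δ g σI σO ∈ winningRegion δ F :=
  ⟨fun _ ⟨_, h⟩ => h.mem, fun _ ⟨st, h⟩ σI => ⟨st [] σI, _, h.step σI⟩⟩

/-- Closure of the winning region of a safety game: the winning region `W` is
contained in the safe states `F`, and from every state of `W`, for every input
there is an output leading back into `W`. -/
theorem winningRegion_closed {G SI SO : Type*} [Nonempty SI] [Nonempty SO]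
    (δ : G → SI → SO → G) (g0 : G) (F : Set G) :
    winningRegion δ F ⊆ F ∧
      ∀ g ∈ winningRegion δ F, ∀ σI : SI, ∃ σO : SO,
        δ g σI σO ∈ winningRegion δ F :=
  winningRegion_closed_general δ F
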